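/- Let N ≥ 1, let 𝔞 be an ideal of the polynomial ring ℂ[z₁,…,z_N], let 0 ≤ ρ ≤ ρ' ≤ 1, and for each 1 ≤ i ≤ N let s_i ∈ ℝ and t_i ∈ ℝ ∪ {+∞} with s_i ≤ t_i. Let W be the set of multiplicative seminorms x on ℂ[z₁,…,z_N] such that x(c·1) ≤ ‖c‖ for all c ∈ ℂ, e^{ρ} ≤ x(e·1) ≤ e^{ρ'} where e = exp(1), e^{−t_i} ≤ x(z_i) ≤ e^{−s_i} for each i (with the convention e^{−∞} := 0), and x(f) = 0 for all f ∈ 𝔞. Then W is compact in the topology of pointwise convergence. -/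

import Mathlib

/-!
A point of the set is bounded on each monomial `c • z^m` by `‖c‖ · ∏ e^{-s_i m_i}`, so by the
triangle inequality every `x(f)` lies in a fixed interval `[0, B(f)]`. The set is thus a subset of
the product `∏_f [0, B(f)]`, compact by Tychonoff, and it is closed there because each of its
defining conditions is a (possibly infinite) conjunction of non-strict inequalities between
finitely many coordinates.
-/

/-- A multiplicative seminorm on a commutative ring `A`. -/
def IsMultSeminorm {A : Type*} [CommRing A] (x : A → ℝ) : Prop :=
  (∀ f, 0 ≤ x f) ∧ x 0 = 0 ∧ x 1 = 1 ∧
    (∀ f g, x (f * g) = x f * x g) ∧ (∀ f g, x (f + g) ≤ x f + x g)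

/-- The hybrid norm on `ℂ`: the maximum of the Archimedean and the trivial absolute value. -/
noncomputable def hybridNorm (a : ℂ) : ℝ := if a = 0 then 0 else max ‖a‖ 1

/-- `e^{-t}` for `t ∈ ℝ ∪ {+∞}`, with the convention `e^{-∞} = 0`. -/
noncomputable def expNegExt : WithTop ℝ → ℝ :=
  WithTop.recTopCoe 0 fun r => Real.exp (-r)

namespace IsMultSeminorm

variable {A : Type*} [CommRing A] {x : A → ℝ}

@[simps]
def toMonoidHom (hx : IsMultSeminorm x) : A →* ℝ where
  toFun := x
  map_one' := hx.2.2.1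
  map_mul' := hx.2.2.2.1

theorem map_sum_le (hx : IsMultSeminorm x) {ι : Type*} (u : Finset ι) (g : ι → A) :
    x (∑ i ∈ u, g i) ≤ ∑ i ∈ u, x (g i) :=
  Finset.le_sum_of_subadditive x hx.2.1.le hx.2.2.2.2 u g

theorem map_pow (hx : IsMultSeminorm x) (f : A) (n : ℕ) : x (f ^ n) = x f ^ n :=
  _root_.map_pow hx.toMonoidHom f n

end IsMultSeminorm

theorem isClosed_setOf_isMultSeminorm (A : Type*) [CommRing A] :
    IsClosed {x : A → ℝ | IsMultSeminorm x} := by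
  simp only [IsMultSeminorm, Set.ofPred_and, Set.ofPred_forall]
  refine (isClosed_iInter fun f => ?_).inter <| IsClosed.inter ?_ <| IsClosed.inter ?_ <|
    (isClosed_iInter fun f => isClosed_iInter fun g => ?_).inter
    (isClosed_iInter fun f => isClosed_iInter fun g => ?_)
  · exact isClosed_le continuous_const (continuous_apply f)
  · exact isClosed_eq (continuous_apply 0) continuous_const
  · exact isClosed_eq (continuous_apply 1) continuous_const
  · exact isClosed_eq (continuous_apply _) ((continuous_apply f).mul (continuous_apply g))
  · exact isClosed_le (continuous_apply _) ((continuous_apply f).add (continuous_apply g))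

namespace MvPolynomial

variable {σ R : Type*} [CommRing R]

noncomputable def majorant (β : R → ℝ) (r : σ → ℝ) (f : MvPolynomial σ R) : ℝ :=
  ∑ m ∈ f.support, β (f.coeff m) * m.prod fun i e => r i ^ e

theorem _root_.IsMultSeminorm.le_majorant {x : MvPolynomial σ R → ℝ} (hx : IsMultSeminorm x)
    {β : R → ℝ} {r : σ → ℝ} (hC : ∀ c, x (C c) ≤ β c) (hX : ∀ i, x (X i) ≤ r i)
    (f : MvPolynomial σ R) : x f ≤ majorant β r f := by
  conv_lhs => rw [f.as_sum]
  refine (hx.map_sum_le _ _).trans (Finset.sum_le_sum fun m _ => ?_)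
  have hXm : x (m.prod fun i e => X i ^ e) = m.prod fun i e => x (X i) ^ e := by
    simpa [hx.map_pow] using
      map_finsuppProd hx.toMonoidHom m fun i e => (X i : MvPolynomial σ R) ^ e
  have hXm_le : (m.prod fun i e => x (X i) ^ e) ≤ m.prod fun i e => r i ^ e :=
    Finset.prod_le_prod (fun i _ => pow_nonneg (hx.1 _) _)
      fun i _ => pow_le_pow_left₀ (hx.1 _) (hX i) _
  rw [monomial_eq, hx.2.2.2.1, hXm]
  exact mul_le_mul (hC _) hXm_le (hXm ▸ hx.1 _) ((hx.1 _).trans (hC _))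

end MvPolynomial

theorem trop_preimage_compact_general
    (N : ℕ) (a : Ideal (MvPolynomial (Fin N) ℂ))
    (ρ ρ' : ℝ)
    (s : Fin N → ℝ) (t : Fin N → WithTop ℝ) :
    IsCompact {x : MvPolynomial (Fin N) ℂ → ℝ |
      IsMultSeminorm x ∧
      (∀ c : ℂ, x (MvPolynomial.C c) ≤ hybridNorm c) ∧
      Real.exp ρ ≤ x (MvPolynomial.C ((Real.exp 1 : ℝ) : ℂ)) ∧
      x (MvPolynomial.C ((Real.exp 1 : ℝ) : ℂ)) ≤ Real.exp ρ' ∧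
      (∀ i : Fin N, expNegExt (t i) ≤ x (MvPolynomial.X i) ∧
        x (MvPolynomial.X i) ≤ Real.exp (-(s i))) ∧
      (∀ f ∈ a, x f = 0)} := by
  let B := MvPolynomial.majorant hybridNorm fun i => Real.exp (-(s i))
  refine (isCompact_pi_infinite fun f => isCompact_Icc (a := 0) (b := B f)).of_isClosed_subset
    ?closed ?bounded
  case bounded =>
    rintro x ⟨hx, hC, -, -, hX, -⟩ f
    exact ⟨hx.1 f, hx.le_majorant hC (fun i => (hX i).2) f⟩
  case closed =>
    simp only [Set.ofPred_and, Set.ofPred_forall]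
    refine (isClosed_setOf_isMultSeminorm _).inter ?_
    repeat' first
      | refine isClosed_iInter fun _ => ?_
      | refine IsClosed.inter ?_ ?_
      | exact isClosed_le (by fun_prop) (by fun_prop)
      | exact isClosed_eq (by fun_prop) (by fun_prop)

/-- The compactness assertion at the heart of the properness part of Proposition 2.1:
the set of multiplicative seminorms on `ℂ[z₁,…,z_N]` bounded on `ℂ` by the hybrid norm,
with `e^ρ ≤ x(e·1) ≤ e^{ρ'}`, `e^{-t_i} ≤ x(z_i) ≤ e^{-s_i}` and vanishing on the ideal
`𝔞`, is compact in the topology of pointwise convergence. -/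
theorem trop_preimage_compact
    (N : ℕ) (hN : 1 ≤ N) (a : Ideal (MvPolynomial (Fin N) ℂ))
    (ρ ρ' : ℝ) (hρ : 0 ≤ ρ) (hρρ' : ρ ≤ ρ') (hρ' : ρ' ≤ 1)
    (s : Fin N → ℝ) (t : Fin N → WithTop ℝ) (hst : ∀ i, (s i : WithTop ℝ) ≤ t i) :
    IsCompact {x : MvPolynomial (Fin N) ℂ → ℝ |
      IsMultSeminorm x ∧
      (∀ c : ℂ, x (MvPolynomial.C c) ≤ hybridNorm c) ∧
      Real.exp ρ ≤ x (MvPolynomial.C ((Real.exp 1 : ℝ) : ℂ)) ∧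
      x (MvPolynomial.C ((Real.exp 1 : ℝ) : ℂ)) ≤ Real.exp ρ' ∧
      (∀ i : Fin N, expNegExt (t i) ≤ x (MvPolynomial.X i) ∧
        x (MvPolynomial.X i) ≤ Real.exp (-(s i))) ∧
      (∀ f ∈ a, x f = 0)} :=
  trop_preimage_compact_general N a ρ ρ' s t
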